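/- arXiv:0810.3634 — 4 statements merged into one kernel-verified Lean document; each statement's English description precedes it below -/
import Mathlib

section
/- Let y, ε, b₀, b₁, b₂, a₁, a₂ be real numbers with y > 0, y ≠ 1, a₁ + a₂ + 2 = 0, and suppose the exponents ε·b₀, 1 + a₁ + ε·b₁, and 1 + a₂ + ε·b₂ are all nonzero (so that all denominators below are nonzero, using real powers y^t = exp(t·log y)). Then (y−1)²·[1/((y^(ε·b₀)−1)(y^(1+a₁+ε·b₁)−1)) + 1/((y^(ε·b₀)−1)(y^(1+a₂+ε·b₂)−1)) + 1/(y^(ε·b₀)−1)] = (y−1)²·(y^(ε·(b₁+b₂))−1)/((y^(ε·b₀)−1)(y^(1+a₁+ε·b₁)−1)(y^(1+a₂+ε·b₂)−1)). -/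
lemma rpow_sub_one_ne_zero {y t : ℝ} (hy : 0 < y) (hy1 : y ≠ 1) (ht : t ≠ 0) :
    y ^ t - 1 ≠ 0 := by
  rw [sub_ne_zero, Real.rpow_def_of_pos hy]
  intro h
  have h0 : Real.log y * t = 0 := Real.exp_eq_exp.mp (h.trans Real.exp_zero.symm)
  rcases mul_eq_zero.mp h0 with h | h
  · exact (Real.log_ne_zero_of_pos_of_ne_one hy hy1) h
  · exact ht h

/-- The perturbed stringy `χ_y`-genus contribution of a `-1`-discrepancy curve meeting
two components with coefficients `a₁, a₂` (with `a₁ + a₂ + 2 = 0` by adjunction)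
combines into a single fraction. Here `y ^ t` denotes the real power `exp (t * log y)`. -/
theorem perturbed_chi_y_contribution_combines
    (y ε b₀ b₁ b₂ a₁ a₂ : ℝ) (hy : 0 < y) (hy1 : y ≠ 1)
    (hadj : a₁ + a₂ + 2 = 0)
    (h₀ : ε * b₀ ≠ 0) (h₁ : 1 + a₁ + ε * b₁ ≠ 0) (h₂ : 1 + a₂ + ε * b₂ ≠ 0) :
    (y - 1) ^ 2 *
        (1 / ((y ^ (ε * b₀) - 1) * (y ^ (1 + a₁ + ε * b₁) - 1)) +
         1 / ((y ^ (ε * b₀) - 1) * (y ^ (1 + a₂ + ε * b₂) - 1)) +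
         1 / (y ^ (ε * b₀) - 1)) =
      (y - 1) ^ 2 * (y ^ (ε * (b₁ + b₂)) - 1) /
        ((y ^ (ε * b₀) - 1) * (y ^ (1 + a₁ + ε * b₁) - 1) *
          (y ^ (1 + a₂ + ε * b₂) - 1)) := by
  have hA := rpow_sub_one_ne_zero hy hy1 h₀
  have hB := rpow_sub_one_ne_zero hy hy1 h₁
  have hC := rpow_sub_one_ne_zero hy hy1 h₂
  have key : y ^ (1 + a₁ + ε * b₁) * y ^ (1 + a₂ + ε * b₂) = y ^ (ε * (b₁ + b₂)) := by
    rw [← Real.rpow_add hy]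
    congr 1
    linarith [hadj]
  rw [← key]
  field_simp
  ring
end

section
/- Let y, a₁, a₂, b₀, b₁, b₂ be real numbers with y > 0, y ≠ 1, a₁ + a₂ + 2 = 0, 1 + a₁ ≠ 0, and b₀ ≠ 0. Then, as ε → 0 through nonzero values, the function ε ↦ (y−1)²·(y^(ε·(b₁+b₂))−1)/((y^(ε·b₀)−1)·(y^(1+a₁+ε·b₁)−1)·(y^(1+a₂+ε·b₂)−1)) tends to ((b₁+b₂)/b₀)·(y−1)²/((y^(1+a₁)−1)·(y^(1+a₂)−1)). In particular the limit exists, and it depends on the perturbation coefficients b₀, b₁, b₂ only through the ratio (b₁+b₂)/b₀. -/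
open Filter Topology

lemma slope_lim (y c : ℝ) (hy : 0 < y) :
    Tendsto (fun ε : ℝ => (y ^ (ε * c) - 1) / ε) (𝓝[≠] (0 : ℝ))
      (𝓝 (c * Real.log y)) := by
  have hD : HasDerivAt (fun ε : ℝ => y ^ (ε * c)) (c * Real.log y) 0 := by
    have h1 : HasDerivAt (fun ε : ℝ => ε * (Real.log y * c)) (Real.log y * c) 0 :=
      hasDerivAt_mul_const _
    have h2 := (Real.hasDerivAt_exp (0 * (Real.log y * c))).comp 0 h1
    simp only [Function.comp_def, zero_mul, Real.exp_zero, one_mul] at h2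
    have : (fun ε : ℝ => y ^ (ε * c)) = fun ε : ℝ => Real.exp (ε * (Real.log y * c)) := by
      funext ε
      rw [Real.rpow_def_of_pos hy]
      ring_nf
    rw [this, mul_comm (Real.log y) c] at *
    exact h2
  have := hasDerivAt_iff_tendsto_slope.mp hD
  refine this.congr fun ε => ?_
  simp [slope_def_field, Real.rpow_natCast]

/-- As `ε → 0` through nonzero values, the perturbed stringy `χ_y`-genus contribution
of a `-1`-discrepancy curve tends to `((b₁+b₂)/b₀) · (y−1)²/((y^(1+a₁)−1)(y^(1+a₂)−1))`;
in particular the limit depends on the perturbation only through `(b₁+b₂)/b₀`.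
Here `y ^ t` denotes the real power `exp (t * log y)`. -/
theorem perturbed_chi_y_contribution_limit
    (y a₁ a₂ b₀ b₁ b₂ : ℝ) (hy : 0 < y) (hy1 : y ≠ 1)
    (hadj : a₁ + a₂ + 2 = 0) (ha₁ : 1 + a₁ ≠ 0) (hb₀ : b₀ ≠ 0) :
    Tendsto
      (fun ε : ℝ =>
        (y - 1) ^ 2 * (y ^ (ε * (b₁ + b₂)) - 1) /
          ((y ^ (ε * b₀) - 1) * (y ^ (1 + a₁ + ε * b₁) - 1) *
            (y ^ (1 + a₂ + ε * b₂) - 1)))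
      (𝓝[≠] (0 : ℝ))
      (𝓝 ((b₁ + b₂) / b₀ * (y - 1) ^ 2 /
        ((y ^ (1 + a₁) - 1) * (y ^ (1 + a₂) - 1)))) := by
  have hlog : Real.log y ≠ 0 := Real.log_ne_zero_of_pos_of_ne_one hy hy1
  have ha₂ : 1 + a₂ ≠ 0 := by intro h; apply ha₁; linarith
  have hpow_ne : ∀ t : ℝ, t ≠ 0 → y ^ t - 1 ≠ 0 := by
    intro t ht
    rw [sub_ne_zero, Real.rpow_def_of_pos hy]
    rw [← Real.exp_zero]
    intro h
    exact ht (by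
      have := Real.exp_injective h
      rcases mul_eq_zero.mp this with h | h
      · exact absurd h hlog
      · exact h)
  -- continuity of the "regular" factor
  have hcont : ∀ a b : ℝ, Tendsto (fun ε : ℝ => y ^ (a + ε * b) - 1) (𝓝[≠] (0:ℝ))
      (𝓝 (y ^ a - 1)) := by
    intro a b
    have : Continuous (fun ε : ℝ => y ^ (a + ε * b) - 1) := by
      have : Continuous (fun ε : ℝ => Real.exp (Real.log y * (a + ε * b)) - 1) := by
        continuity
      simpa [Real.rpow_def_of_pos hy] using this
    have h0 := this.tendsto 0
    simp only [zero_mul, add_zero] at h0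
    exact h0.mono_left nhdsWithin_le_nhds
  -- ratio of the two singular factors
  have hratio : Tendsto (fun ε : ℝ => (y ^ (ε * (b₁ + b₂)) - 1) / (y ^ (ε * b₀) - 1))
      (𝓝[≠] (0:ℝ)) (𝓝 ((b₁ + b₂) / b₀)) := by
    have h1 := slope_lim y (b₁ + b₂) hy
    have h2 := slope_lim y b₀ hy
    have hne : b₀ * Real.log y ≠ 0 := mul_ne_zero hb₀ hlog
    have := h1.div h2 hne
    have heq : ((b₁ + b₂) * Real.log y) / (b₀ * Real.log y) = (b₁ + b₂) / b₀ := by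
      field_simp
    rw [heq] at this
    refine Tendsto.congr' ?_ this
    filter_upwards [self_mem_nhdsWithin] with ε (hε : ε ≠ 0)
    simp only [Pi.div_apply]
    rw [div_div_div_cancel_right₀ hε]
  -- the limit of the continuous part
  have hden : (y ^ (1 + a₁) - 1) * (y ^ (1 + a₂) - 1) ≠ 0 :=
    mul_ne_zero (hpow_ne _ ha₁) (hpow_ne _ ha₂)
  have hreg : Tendsto (fun ε : ℝ =>
      (y - 1) ^ 2 / ((y ^ (1 + a₁ + ε * b₁) - 1) * (y ^ (1 + a₂ + ε * b₂) - 1)))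
      (𝓝[≠] (0:ℝ)) (𝓝 ((y - 1) ^ 2 / ((y ^ (1 + a₁) - 1) * (y ^ (1 + a₂) - 1)))) :=
    tendsto_const_nhds.div ((hcont (1 + a₁) b₁).mul (hcont (1 + a₂) b₂)) hden
  have hmul := hratio.mul hreg
  have hval : (b₁ + b₂) / b₀ * ((y - 1) ^ 2 / ((y ^ (1 + a₁) - 1) * (y ^ (1 + a₂) - 1)))
      = (b₁ + b₂) / b₀ * (y - 1) ^ 2 / ((y ^ (1 + a₁) - 1) * (y ^ (1 + a₂) - 1)) := by
    ring
  rw [hval] at hmul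
  refine hmul.congr fun ε => ?_
  field_simp
end

section
/- Let y, a₁, a₂, b₀, b₁, b₂ be real numbers and m a positive integer, with y > 0, y ≠ 1, a₁ + a₂ + 2 = 0, 1 + a₁ ≠ 0, b₀ ≠ 0, and b₁ + b₂ = m·b₀. Then, as ε → 0 through nonzero values, (y−1)²·(y^(ε·(b₁+b₂))−1)/((y^(ε·b₀)−1)·(y^(1+a₁+ε·b₁)−1)·(y^(1+a₂+ε·b₂)−1)) tends to m·(y−1)²/((y^(1+a₁)−1)·(y^(1+a₂)−1)); in particular the limit depends only on m and not on the individual values of b₀, b₁, b₂. -/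
open Filter Topology

private lemma veys_cont_rpow {y : ℝ} (hy : 0 < y) : Continuous (fun t : ℝ => y ^ t) := by
  have h : (fun t : ℝ => y ^ t) = fun t => Real.exp (Real.log y * t) := by
    funext t; rw [Real.rpow_def_of_pos hy]
  rw [h]
  exact Real.continuous_exp.comp (continuous_const.mul continuous_id)

private lemma veys_rpow_ne_one {y t : ℝ} (hy : 0 < y) (hy1 : y ≠ 1) (ht : t ≠ 0) :
    y ^ t ≠ 1 := by
  rw [Real.rpow_def_of_pos hy]
  simpa [Real.exp_eq_one_iff] using
    mul_ne_zero (Real.log_ne_zero_of_pos_of_ne_one hy hy1) ht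

/-- Veys' stringy contribution of a `-1`-discrepancy curve: if the null-perturbation
coefficients satisfy `b₁ + b₂ = m·b₀` for a positive integer `m`, then as `ε → 0`
through nonzero values the perturbed contribution tends to
`m · (y−1)²/((y^(1+a₁)−1)(y^(1+a₂)−1))`, depending only on `m`.
Here `y ^ t` denotes the real power `exp (t * log y)`. -/
theorem veys_contribution_limit
    (y a₁ a₂ b₀ b₁ b₂ : ℝ) (m : ℕ) (hm : 0 < m)
    (hy : 0 < y) (hy1 : y ≠ 1)
    (hadj : a₁ + a₂ + 2 = 0) (ha₁ : 1 + a₁ ≠ 0) (hb₀ : b₀ ≠ 0)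
    (hnull : b₁ + b₂ = (m : ℝ) * b₀) :
    Tendsto
      (fun ε : ℝ =>
        (y - 1) ^ 2 * (y ^ (ε * (b₁ + b₂)) - 1) /
          ((y ^ (ε * b₀) - 1) * (y ^ (1 + a₁ + ε * b₁) - 1) *
            (y ^ (1 + a₂ + ε * b₂) - 1)))
      (𝓝[≠] (0 : ℝ))
      (𝓝 ((m : ℝ) * (y - 1) ^ 2 /
        ((y ^ (1 + a₁) - 1) * (y ^ (1 + a₂) - 1)))) := by
  have ha₂ : 1 + a₂ ≠ 0 := by
    intro h; apply ha₁; linarith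
  -- the simplified function
  set g : ℝ → ℝ := fun ε =>
    (∑ i ∈ Finset.range m, (y ^ (ε * b₀)) ^ i) *
      ((y - 1) ^ 2 / ((y ^ (1 + a₁ + ε * b₁) - 1) * (y ^ (1 + a₂ + ε * b₂) - 1)))
    with hg_def
  -- limit of g at 0
  have hcont : Continuous (fun t : ℝ => y ^ t) := veys_cont_rpow hy
  have hB : Tendsto (fun ε : ℝ => y ^ (ε * b₀)) (𝓝 0) (𝓝 1) := by
    have : Tendsto (fun ε : ℝ => y ^ (ε * b₀)) (𝓝 0) (𝓝 (y ^ ((0:ℝ) * b₀))) :=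
      (hcont.comp (continuous_id.mul continuous_const)).tendsto 0
    simpa using this
  have hS : Tendsto (fun ε : ℝ => ∑ i ∈ Finset.range m, (y ^ (ε * b₀)) ^ i)
      (𝓝 0) (𝓝 (m : ℝ)) := by
    have : Tendsto (fun ε : ℝ => ∑ i ∈ Finset.range m, (y ^ (ε * b₀)) ^ i)
        (𝓝 0) (𝓝 (∑ i ∈ Finset.range m, (1:ℝ) ^ i)) :=
      tendsto_finset_sum _ (fun i _ => by simpa using hB.pow i)
    simpa using this
  have hC : Tendsto (fun ε : ℝ => y ^ (1 + a₁ + ε * b₁) - 1) (𝓝 0)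
      (𝓝 (y ^ (1 + a₁) - 1)) := by
    have : Tendsto (fun ε : ℝ => y ^ (1 + a₁ + ε * b₁)) (𝓝 0)
        (𝓝 (y ^ (1 + a₁ + (0:ℝ) * b₁))) :=
      (hcont.comp (continuous_const.add (continuous_id.mul continuous_const))).tendsto 0
    simpa using this.sub tendsto_const_nhds
  have hD : Tendsto (fun ε : ℝ => y ^ (1 + a₂ + ε * b₂) - 1) (𝓝 0)
      (𝓝 (y ^ (1 + a₂) - 1)) := by
    have : Tendsto (fun ε : ℝ => y ^ (1 + a₂ + ε * b₂)) (𝓝 0)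
        (𝓝 (y ^ (1 + a₂ + (0:ℝ) * b₂))) :=
      (hcont.comp (continuous_const.add (continuous_id.mul continuous_const))).tendsto 0
    simpa using this.sub tendsto_const_nhds
  have hC0 : y ^ (1 + a₁) - 1 ≠ 0 := sub_ne_zero.mpr (veys_rpow_ne_one hy hy1 ha₁)
  have hD0 : y ^ (1 + a₂) - 1 ≠ 0 := sub_ne_zero.mpr (veys_rpow_ne_one hy hy1 ha₂)
  have hgtend : Tendsto g (𝓝 0)
      (𝓝 ((m : ℝ) * ((y - 1) ^ 2 / ((y ^ (1 + a₁) - 1) * (y ^ (1 + a₂) - 1))))) :=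
    hS.mul (tendsto_const_nhds.div (hC.mul hD) (mul_ne_zero hC0 hD0))
  have hgtend' : Tendsto g (𝓝[≠] (0:ℝ))
      (𝓝 ((m : ℝ) * (y - 1) ^ 2 / ((y ^ (1 + a₁) - 1) * (y ^ (1 + a₂) - 1)))) := by
    rw [mul_div_assoc]
    exact hgtend.mono_left nhdsWithin_le_nhds
  refine hgtend'.congr' ?_
  filter_upwards [self_mem_nhdsWithin] with ε (hε : ε ≠ 0)
  have hεb : ε * b₀ ≠ 0 := mul_ne_zero hε hb₀
  have hBne : y ^ (ε * b₀) - 1 ≠ 0 := sub_ne_zero.mpr (veys_rpow_ne_one hy hy1 hεb)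
  have hgeo : y ^ (ε * (b₁ + b₂)) - 1 =
      (y ^ (ε * b₀) - 1) * ∑ i ∈ Finset.range m, (y ^ (ε * b₀)) ^ i := by
    have hexp : ε * (b₁ + b₂) = (ε * b₀) * (m : ℝ) := by rw [hnull]; ring
    rw [hexp, Real.rpow_mul (le_of_lt hy) (ε * b₀) (m : ℝ), Real.rpow_natCast,
      ← geom_sum_mul]
    ring
  show g ε = _
  rw [hg_def]
  simp only [hgeo]
  set B := y ^ (ε * b₀) - 1
  set S := ∑ i ∈ Finset.range m, (y ^ (ε * b₀)) ^ i
  set C := y ^ (1 + a₁ + ε * b₁) - 1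
  set D := y ^ (1 + a₂ + ε * b₂) - 1
  rw [show (y - 1) ^ 2 * (B * S) = B * (S * (y - 1) ^ 2) from by ring,
    show B * C * D = B * (C * D) from mul_assoc B C D,
    mul_div_mul_left _ _ hBne, mul_div_assoc]
end

section
/- Let w, a, α, γ₁, γ₂, m, b, b₁, b₂ be real numbers with w > 0, w ≠ 1, a ≠ 0, b ≠ 0, and b₁ + b₂ = m·b. Then, as ε → 0 through nonzero values, the function ε ↦ (w−1)²/(w^(ε·b)−1) · [ w^(α·(a+ε·b₁)+ε·γ₁·b)/(w^(a+ε·b₁)−1) + w^((1−α)·(−a+ε·b₂)+ε·γ₂·b)/(w^(−a+ε·b₂)−1) ] tends to w^(α·a)·(w−1)²·((γ₁−γ₂−(1−α)·m)·(w^a−1) − m)/(w^a−1)². In particular the limit exists and depends on b, b₁, b₂ only through m = (b₁+b₂)/b. -/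
open Filter Topology

/-!
Write the expression as `(w - 1)² · F(ε) / G(ε)` with `G(ε) = w^(εb) - 1`. At `ε = 0` both
summands of `F` cancel, because `w^(αa - a) / (w^(-a) - 1) = -w^(αa) / (w^a - 1)`, and
`G(0) = 0`; since `G'(0) = b log w ≠ 0`, the limit is `(w - 1)² · F'(0) / G'(0)`, a quotient of
ratios of slopes. Differentiating the two summands of `F` and using `b₁ + b₂ = m b` gives the
stated value.
-/

/-- A first-order L'Hôpital rule: it only needs derivatives at the point itself. -/
theorem HasDerivAt.tendsto_div_of_eq_zero {𝕜 : Type*} [NontriviallyNormedField 𝕜]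
    {f g : 𝕜 → 𝕜} {f' g' x : 𝕜} (hf : HasDerivAt f f' x) (hg : HasDerivAt g g' x)
    (hf0 : f x = 0) (hg0 : g x = 0) (hg' : g' ≠ 0) :
    Tendsto (fun y => f y / g y) (𝓝[≠] x) (𝓝 (f' / g')) := by
  refine ((hasDerivAt_iff_tendsto_slope.mp hf).div (hasDerivAt_iff_tendsto_slope.mp hg)
    hg').congr' ?_
  filter_upwards [self_mem_nhdsWithin] with y hy
  rw [Pi.div_apply, slope_def_field, slope_def_field, hf0, hg0, sub_zero, sub_zero,
    div_div_div_cancel_right₀ (sub_ne_zero.mpr hy)]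

namespace Real

variable {w : ℝ}

theorem rpow_sub_one_ne_zero (hw : 0 < w) (hw1 : w ≠ 1) {x : ℝ} (hx : x ≠ 0) :
    w ^ x - 1 ≠ 0 := by
  rw [sub_ne_zero, rpow_def_of_pos hw, Ne, exp_eq_one_iff]
  exact mul_ne_zero (log_ne_zero_of_pos_of_ne_one hw hw1) hx

theorem rpow_div_rpow_sub_one_add_rpow_sub_div_rpow_neg_sub_one (hw : 0 < w) (p q : ℝ)
    (hq : w ^ q - 1 ≠ 0) :
    w ^ p / (w ^ q - 1) + w ^ (p - q) / (w ^ (-q) - 1) = 0 := by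
  have hq' : 1 - w ^ q ≠ 0 := by rwa [← neg_sub, neg_ne_zero]
  rw [rpow_sub hw, rpow_neg hw.le]
  field_simp
  ring

theorem hasDerivAt_rpow_add_mul (hw : 0 < w) (p c : ℝ) :
    HasDerivAt (fun ε : ℝ => w ^ (p + ε * c)) (log w * c * w ^ p) 0 := by
  simpa using (((hasDerivAt_id (0 : ℝ)).mul_const c).const_add p).const_rpow hw

theorem hasDerivAt_rpow_div_rpow_sub_one (hw : 0 < w) (p c q d : ℝ) (hq : w ^ q - 1 ≠ 0) :
    HasDerivAt (fun ε : ℝ => w ^ (p + ε * c) / (w ^ (q + ε * d) - 1))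
      (log w * w ^ p * (c * (w ^ q - 1) - w ^ q * d) / (w ^ q - 1) ^ 2) 0 := by
  have hq0 : w ^ (q + 0 * d) - 1 ≠ 0 := by simpa using hq
  refine ((hasDerivAt_rpow_add_mul hw p c).div
    ((hasDerivAt_rpow_add_mul hw q d).sub_const 1) hq0).congr_deriv ?_
  simp only [zero_mul, add_zero]
  ring

end Real

/-- Evaluation of the limit `H(t,g)` in the closed formula for the orbifold
`E`-function: as `ε → 0` through nonzero values, the perturbed contribution of a
group element rotating a `-1`-discrepancy curve tends to
`w^(α·a)·(w−1)²·((γ₁−γ₂−(1−α)·m)·(w^a−1) − m)/(w^a−1)²`, which depends on the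
perturbation only through `m = (b₁+b₂)/b`. Here `w ^ t` denotes `exp (t * log w)`. -/
theorem rotation_contribution_limit
    (w a α γ₁ γ₂ m b b₁ b₂ : ℝ) (hw : 0 < w) (hw1 : w ≠ 1)
    (ha : a ≠ 0) (hb : b ≠ 0) (hnull : b₁ + b₂ = m * b) :
    Tendsto
      (fun ε : ℝ =>
        (w - 1) ^ 2 / (w ^ (ε * b) - 1) *
          (w ^ (α * (a + ε * b₁) + ε * γ₁ * b) / (w ^ (a + ε * b₁) - 1) +
           w ^ ((1 - α) * (-a + ε * b₂) + ε * γ₂ * b) / (w ^ (-a + ε * b₂) - 1)))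
      (𝓝[≠] (0 : ℝ))
      (𝓝 (w ^ (α * a) * (w - 1) ^ 2 *
        ((γ₁ - γ₂ - (1 - α) * m) * (w ^ a - 1) - m) / (w ^ a - 1) ^ 2)) := by
  have hA : w ^ a - 1 ≠ 0 := Real.rpow_sub_one_ne_zero hw hw1 ha
  have hA' : w ^ (-a) - 1 ≠ 0 := Real.rpow_sub_one_ne_zero hw hw1 (neg_ne_zero.mpr ha)
  have hL : Real.log w ≠ 0 := Real.log_ne_zero_of_pos_of_ne_one hw hw1
  have hF := (Real.hasDerivAt_rpow_div_rpow_sub_one hw (α * a) (α * b₁ + γ₁ * b) a b₁ hA).add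
    (Real.hasDerivAt_rpow_div_rpow_sub_one hw (α * a - a) ((1 - α) * b₂ + γ₂ * b) (-a) b₂ hA')
  have hG := (Real.hasDerivAt_rpow_add_mul hw 0 b).sub_const 1
  have hF0 := Real.rpow_div_rpow_sub_one_add_rpow_sub_div_rpow_neg_sub_one hw (α * a) a hA
  have hlim := ((hF.tendsto_div_of_eq_zero hG (by simpa using hF0) (by simp)
    (by simpa using mul_ne_zero hL hb)).const_mul ((w - 1) ^ 2))
  convert hlim using 2 with ε
  · simp only [Pi.add_apply, zero_add]
    ring_nf
  · have hb₂ : b₂ = m * b - b₁ := by linarith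
    rw [Real.rpow_sub hw, Real.rpow_neg hw.le, hb₂, Real.rpow_zero]
    have hA₁ : 1 - w ^ a ≠ 0 := by rwa [← neg_sub, neg_ne_zero]
    field_simp
    ring
end
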